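/- Let Σ̂⁽¹⁾, Σ̂⁽²⁾ be symmetric p×p real matrices and λ, ρ ≥ 0. If (Θ̂⁽¹⁾, Θ̂⁽²⁾) minimizes the fused graphical lasso objective F(Θ₁,Θ₂) = Σ_{k=1}² [tr(Σ̂⁽ᵏ⁾Θ_k) − log det Θ_k] + λ Σ_{k=1}² ‖Θ_k⁻‖₁ + ρ ‖Θ₁⁻ − Θ₂⁻‖₁ over pairs of symmetric positive definite matrices, then there exist p×p matrices Z₁, Z₂, Z₁₂ with zero diagonals and ‖Z₁‖_∞ ≤ 1, ‖Z₂‖_∞ ≤ 1, ‖Z₁₂‖_∞ ≤ 1, such that Σ̂⁽¹⁾ − (Θ̂⁽¹⁾)⁻¹ + λZ₁ + ρZ₁₂ = 0 and Σ̂⁽²⁾ − (Θ̂⁽²⁾)⁻¹ + λZ₂ − ρZ₁₂ = 0; moreover (Z₁)_{ij} = sign((Θ̂⁽¹⁾)_{ij}) whenever i ≠ j and (Θ̂⁽¹⁾)_{ij} ≠ 0, (Z₂)_{ij} = sign((Θ̂⁽²⁾)_{ij}) whenever i ≠ j and (Θ̂⁽²⁾)_{ij} ≠ 0, and (Z₁₂)_{ij}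 = sign((Θ̂⁽¹⁾ − Θ̂⁽²⁾)_{ij}) whenever i ≠ j and (Θ̂⁽¹⁾ − Θ̂⁽²⁾)_{ij} ≠ 0. -/

import Mathlib

open Matrix
open scoped BigOperators Classical

noncomputable section

/-- Frobenius norm squared: `‖A‖_F² = Σ_{i,j} A_{ij}²`. -/
def frobSq {p : ℕ} (A : Matrix (Fin p) (Fin p) ℝ) : ℝ := ∑ i, ∑ j, (A i j) ^ 2

/-- Frobenius norm `‖A‖_F = (Σ_{i,j} A_{ij}²)^{1/2}`. -/
def frobNorm {p : ℕ} (A : Matrix (Fin p) (Fin p) ℝ) : ℝ := Real.sqrt (frobSq A)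

/-- Entrywise ℓ₁ norm `‖A‖₁ = Σ_{i,j} |A_{ij}|`. -/
def l1Norm {p : ℕ} (A : Matrix (Fin p) (Fin p) ℝ) : ℝ := ∑ i, ∑ j, |A i j|

/-- Entrywise supremum norm `‖A‖_∞ = max_{i,j} |A_{ij}|`. -/
def supNorm {p : ℕ} (A : Matrix (Fin p) (Fin p) ℝ) : ℝ := ⨆ i, ⨆ j, |A i j|

/-- ℓ₁-operator norm `|||A|||₁ = max_j Σ_i |A_{ij}|`. -/
def opNorm1 {p : ℕ} (A : Matrix (Fin p) (Fin p) ℝ) : ℝ := ⨆ j, ∑ i, |A i j|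

/-- `A⁺`: the diagonal matrix with the same diagonal as `A`. -/
def diagPart {p : ℕ} (A : Matrix (Fin p) (Fin p) ℝ) : Matrix (Fin p) (Fin p) ℝ :=
  Matrix.diagonal (fun i => A i i)

/-- `A⁻ = A − A⁺`: the off-diagonal part of `A`. -/
def offDiagPart {p : ℕ} (A : Matrix (Fin p) (Fin p) ℝ) : Matrix (Fin p) (Fin p) ℝ :=
  A - diagPart A

/-- Number of off-diagonal nonzero entries of `A`:
`s = #{(i,j) : i ≠ j, A_{ij} ≠ 0}`. -/
def sparsity {p : ℕ} (A : Matrix (Fin p) (Fin p) ℝ) : ℕ :=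
  (Finset.univ.filter (fun ij : Fin p × Fin p => ij.1 ≠ ij.2 ∧ A ij.1 ij.2 ≠ 0)).card

/-- Fused graphical lasso objective for `K` groups:
`F(Θ₁,…,Θ_K) = Σ_k [tr(Σ̂⁽ᵏ⁾Θ_k) − log det Θ_k] + λ Σ_k ‖Θ_k⁻‖₁
  + ρ Σ_{k<k'} ‖Θ_k⁻ − Θ_{k'}⁻‖₁`. -/
def objFGL {p K : ℕ} (S : Fin K → Matrix (Fin p) (Fin p) ℝ) (lam rho : ℝ)
    (Θ : Fin K → Matrix (Fin p) (Fin p) ℝ) : ℝ :=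
  ∑ k, (Matrix.trace (S k * Θ k) - Real.log (Θ k).det)
    + lam * ∑ k, l1Norm (offDiagPart (Θ k))
    + rho * ∑ k, ∑ k', if k < k' then l1Norm (offDiagPart (Θ k) - offDiagPart (Θ k')) else 0

/-!
Along a perturbation `Θₖ ↦ Θₖ + u Eₖ` with `Eₖ` symmetric, positive definiteness survives for
small `u`, and `d/du log det (Θ + u E) = tr (Θ⁻¹ E)` at `u = 0`; so at the minimiser the smooth
part's derivative dominates minus the one-sided derivative of the penalty. On diagonal directions
the penalty is flat, which forces `Σ̂⁽ᵏ⁾ᵢᵢ = ((Θ̂⁽ᵏ⁾)⁻¹)ᵢᵢ`. On the symmetric direction supported on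
`(i, j), (j, i)` the penalty only sees `a = Θ̂⁽¹⁾ᵢⱼ`, `b = Θ̂⁽²⁾ᵢⱼ`, and the inequality says that
`(α, β) = ((Θ̂⁽¹⁾)⁻¹ − Σ̂⁽¹⁾, (Θ̂⁽²⁾)⁻¹ − Σ̂⁽²⁾)ᵢⱼ` lies under the support function of the
subdifferential of `(a, b) ↦ λ|a| + λ|b| + ρ|a − b|`; a case analysis on which of `a`, `b`, `a − b`
vanish then produces subgradients `z₁, z₂, z₁₂` of `|·|` with `(α, β) = (λz₁ + ρz₁₂, λz₂ − ρz₁₂)`.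
-/

open Filter Topology

namespace Matrix

variable {n : Type*} [Fintype n]

theorem PosDef.eventually_posDef_add_smul {Θ E : Matrix n n ℝ} (hΘ : Θ.PosDef)
    (hE : E.IsHermitian) : ∀ᶠ u in 𝓝 (0 : ℝ), (Θ + u • E).PosDef := by
  have hq : Continuous fun z : ℝ × (n → ℝ) => z.2 ⬝ᵥ (Θ + z.1 • E) *ᵥ z.2 := by fun_prop
  have hsphere : ∀ᶠ u in 𝓝 (0 : ℝ), ∀ y ∈ Metric.sphere (0 : n → ℝ) 1,
      0 < y ⬝ᵥ (Θ + u • E) *ᵥ y := by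
    refine (isCompact_sphere 0 1).eventually_forall_of_forall_eventually fun y hy => ?_
    have hy0 : y ≠ 0 := ne_zero_of_mem_sphere one_ne_zero ⟨y, hy⟩
    refine hq.continuousAt.eventually (lt_mem_nhds ?_)
    simpa using hΘ.dotProduct_mulVec_pos hy0
  filter_upwards [hsphere] with u hu
  refine .of_dotProduct_mulVec_pos (hΘ.1.add (hE.smul (IsSelfAdjoint.all u))) fun x hx => ?_
  have hx' : 0 < ‖x‖ := norm_pos_iff.2 hx
  have h := hu (‖x‖⁻¹ • x) (by simp [norm_smul, hx'.ne'])
  simp only [mulVec_smul, smul_dotProduct, dotProduct_smul, smul_eq_mul] at h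
  rw [star_trivial]
  exact pos_of_mul_pos_right (pos_of_mul_pos_right h (inv_pos.2 hx').le) (inv_pos.2 hx').le

variable [DecidableEq n]

open Polynomial in
theorem hasDerivAt_det_one_add_smul {𝕜 : Type*} [NontriviallyNormedField 𝕜]
    (M : Matrix n n 𝕜) : HasDerivAt (fun u : 𝕜 => (1 + u • M).det) M.trace 0 := by
  have hP : ∀ u, (det (1 + (X : 𝕜[X]) • M.map C)).eval u = (1 + u • M).det := by
    intro u
    simp [eval_det, ← smul_eq_mul_diagonal]
  have h := (det (1 + (X : 𝕜[X]) • M.map C)).hasDerivAt 0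
  rwa [derivative_det_one_add_X_smul, funext hP] at h

theorem hasDerivAt_det_add_smul {𝕜 : Type*} [NontriviallyNormedField 𝕜] {A : Matrix n n 𝕜}
    (hA : IsUnit A.det) (E : Matrix n n 𝕜) :
    HasDerivAt (fun u : 𝕜 => (A + u • E).det) (A.det * (A⁻¹ * E).trace) 0 := by
  have h : ∀ u : 𝕜, A + u • E = A * (1 + u • (A⁻¹ * E)) := fun u => by
    rw [mul_add, mul_one, Matrix.mul_smul, mul_nonsing_inv_cancel_left A E hA]
  simp_rw [h, det_mul]
  exact (hasDerivAt_det_one_add_smul _).const_mul _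

theorem hasDerivAt_log_det_add_smul {A : Matrix n n ℝ} (hA : A.det ≠ 0) (E : Matrix n n ℝ) :
    HasDerivAt (fun u : ℝ => Real.log (A + u • E).det) (A⁻¹ * E).trace 0 := by
  simpa [hA] using (hasDerivAt_det_add_smul hA.isUnit E).log (by simpa using hA)

end Matrix

/-- The one-sided directional derivative `lim_{u → 0⁺} (|a + u s| - |a|) / u` of `|·|` at `a`. -/
def absDirDeriv (a s : ℝ) : ℝ := if a = 0 then |s| else Real.sign a * s

def IsAbsSubgradient (a z : ℝ) : Prop := |z| ≤ 1 ∧ (a ≠ 0 → z = Real.sign a)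

@[simp]
theorem absDirDeriv_zero_right (a : ℝ) : absDirDeriv a 0 = 0 := by
  simp [absDirDeriv]

theorem eventually_abs_add_mul (a s : ℝ) :
    ∀ᶠ u in 𝓝[>] (0 : ℝ), |a + u * s| = |a| + u * absDirDeriv a s := by
  have hcont : Tendsto (fun u : ℝ => a + u * s) (𝓝 0) (𝓝 a) :=
    (by fun_prop : Continuous fun u : ℝ => a + u * s).tendsto' 0 a (by simp)
  rcases lt_trichotomy a 0 with ha | rfl | ha
  · filter_upwards [nhdsWithin_le_nhds (hcont.eventually (gt_mem_nhds ha))] with u hu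
    simp only [absDirDeriv, ha.ne, if_false, abs_of_neg ha, abs_of_neg hu, Real.sign_of_neg ha]
    ring
  · filter_upwards [self_mem_nhdsWithin] with u (hu : 0 < u)
    simp [absDirDeriv, abs_mul, abs_of_pos hu]
  · filter_upwards [nhdsWithin_le_nhds (hcont.eventually (lt_mem_nhds ha))] with u hu
    simp [absDirDeriv, ha.ne', abs_of_pos ha, abs_of_pos hu, Real.sign_of_pos ha]

theorem abs_sign_le_one (a : ℝ) : |Real.sign a| ≤ 1 := by
  rcases Real.sign_apply_eq a with h | h | h <;> simp [h]

theorem isAbsSubgradient_sign (a : ℝ) : IsAbsSubgradient a (Real.sign a) :=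
  ⟨abs_sign_le_one a, fun _ => rfl⟩

theorem isAbsSubgradient_zero_iff {z : ℝ} : IsAbsSubgradient 0 z ↔ |z| ≤ 1 := by
  simp [IsAbsSubgradient]

theorem exists_abs_le_one_mul_eq {m c : ℝ} (hm : 0 ≤ m) (h : |c| ≤ m) :
    ∃ z, |z| ≤ 1 ∧ m * z = c := by
  rcases hm.eq_or_lt with rfl | hm
  · exact ⟨0, by simp, by simp [abs_nonpos_iff.1 h]⟩
  · exact ⟨c / m, by rwa [abs_div, abs_of_pos hm, div_le_one hm], mul_div_cancel₀ c hm.ne'⟩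

theorem exists_isAbsSubgradient_mul_eq {m γ a : ℝ} (hm : 0 ≤ m)
    (h : ∀ s, γ * s ≤ m * absDirDeriv a s) : ∃ z, IsAbsSubgradient a z ∧ m * z = γ := by
  have h₁ := h 1
  have h₂ := h (-1)
  by_cases ha : a = 0
  · simp only [absDirDeriv, ha, if_true, abs_one, abs_neg] at h₁ h₂
    obtain ⟨z, hz, hmz⟩ := exists_abs_le_one_mul_eq hm (abs_le.2 ⟨by linarith, by linarith⟩)
    exact ⟨z, ha ▸ isAbsSubgradient_zero_iff.2 hz, hmz⟩
  · simp only [absDirDeriv, ha, if_false] at h₁ h₂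
    exact ⟨Real.sign a, isAbsSubgradient_sign a, by linarith⟩

theorem exists_fused_subgradients {lam rho a b α β : ℝ} (hlam : 0 ≤ lam) (hrho : 0 ≤ rho)
    (H : ∀ s t, α * s + β * t ≤
      lam * absDirDeriv a s + lam * absDirDeriv b t + rho * absDirDeriv (a - b) (s - t)) :
    ∃ z₁ z₂ z₁₂, IsAbsSubgradient a z₁ ∧ IsAbsSubgradient b z₂ ∧ IsAbsSubgradient (a - b) z₁₂ ∧
      lam * z₁ + rho * z₁₂ = α ∧ lam * z₂ - rho * z₁₂ = β := by
  by_cases hab : a - b = 0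
  · obtain rfl : a = b := sub_eq_zero.1 hab
    by_cases ha : a = 0
    · subst ha
      have hα := H 1 0
      have hα' := H (-1) 0
      have hβ := H 0 1
      have hβ' := H 0 (-1)
      have hαβ := H 1 1
      have hαβ' := H (-1) (-1)
      simp only [absDirDeriv, if_true, sub_self] at hα hα' hβ hβ' hαβ hαβ'
      norm_num at hα hα' hβ hβ' hαβ hαβ'
      -- any `w` in `[α - λ, α + λ] ∩ [-β - λ, -β + λ] ∩ [-ρ, ρ]` serves as `ρ z₁₂`
      set w := max (α - lam) (max (-β - lam) (-rho))
      have hw₁ : α - lam ≤ w := le_max_left _ _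
      have hw₂ : -β - lam ≤ w := (le_max_left _ _).trans (le_max_right _ _)
      have hw₃ : -rho ≤ w := (le_max_right _ _).trans (le_max_right _ _)
      have hw : w ≤ α + lam ∧ w ≤ -β + lam ∧ w ≤ rho := by
        refine ⟨max_le ?_ (max_le ?_ ?_), max_le ?_ (max_le ?_ ?_), max_le ?_ (max_le ?_ ?_)⟩ <;>
          linarith
      obtain ⟨z₁, hz₁, hz₁e⟩ := exists_abs_le_one_mul_eq hlam
        (abs_le.2 (⟨by linarith, by linarith⟩ : -lam ≤ α - w ∧ α - w ≤ lam))
      obtain ⟨z₂, hz₂, hz₂e⟩ := exists_abs_le_one_mul_eq hlam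
        (abs_le.2 (⟨by linarith, by linarith⟩ : -lam ≤ β + w ∧ β + w ≤ lam))
      obtain ⟨z₁₂, hz₁₂, hz₁₂e⟩ := exists_abs_le_one_mul_eq hrho
        (abs_le.2 (⟨by linarith, by linarith⟩ : -rho ≤ w ∧ w ≤ rho))
      simp only [sub_self, isAbsSubgradient_zero_iff]
      exact ⟨z₁, z₂, z₁₂, hz₁, hz₂, hz₁₂, by linarith, by linarith⟩
    · simp only [sub_self] at H ⊢
      obtain ⟨z₁₂, hz₁₂, hz₁₂e⟩ := exists_isAbsSubgradient_mul_eq hrho (a := 0)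
        (γ := α - lam * Real.sign a) fun s => by
          have := H s 0
          simp only [absDirDeriv, ha, if_false, sub_zero] at this ⊢
          linarith
      have hαβ := H 1 1
      have hαβ' := H (-1) (-1)
      simp only [absDirDeriv, ha, sub_self] at hαβ hαβ'
      norm_num at hαβ hαβ'
      exact ⟨_, _, z₁₂, isAbsSubgradient_sign a, isAbsSubgradient_sign a, hz₁₂,
        by linarith, by linarith⟩
  · have hD : ∀ s, absDirDeriv (a - b) s = Real.sign (a - b) * s := fun s => if_neg hab
    obtain ⟨z₁, hz₁, hz₁e⟩ := exists_isAbsSubgradient_mul_eq hlam (a := a)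
        (γ := α - rho * Real.sign (a - b)) fun s => by
      have := H s 0
      simp only [hD, absDirDeriv_zero_right] at this
      linarith
    obtain ⟨z₂, hz₂, hz₂e⟩ := exists_isAbsSubgradient_mul_eq hlam (a := b)
        (γ := β + rho * Real.sign (a - b)) fun t => by
      have := H 0 t
      simp only [hD, absDirDeriv_zero_right] at this
      linarith
    exact ⟨z₁, z₂, _, hz₁, hz₂, isAbsSubgradient_sign _, by linarith, by linarith⟩

def logDetLoss {n : Type*} [Fintype n] [DecidableEq n] (S Θ : Matrix n n ℝ) : ℝ :=
  (S * Θ).trace - Real.log Θ.det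

section Entrywise

variable {p : ℕ}

theorem supNorm_le {Z : Matrix (Fin p) (Fin p) ℝ} {c : ℝ} (hc : 0 ≤ c)
    (h : ∀ i j, |Z i j| ≤ c) : supNorm Z ≤ c :=
  Real.iSup_le (fun i => Real.iSup_le (h i) hc) hc

theorem offDiagPart_apply (A : Matrix (Fin p) (Fin p) ℝ) (i j : Fin p) :
    offDiagPart A i j = if i = j then 0 else A i j := by
  by_cases h : i = j <;> simp [offDiagPart, diagPart, h]

theorem offDiagPart_add (A B : Matrix (Fin p) (Fin p) ℝ) :
    offDiagPart (A + B) = offDiagPart A + offDiagPart B := by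
  ext i j
  simp only [offDiagPart_apply, Matrix.add_apply]
  split_ifs <;> simp

theorem offDiagPart_single_self (i : Fin p) (c : ℝ) : offDiagPart (single i i c) = 0 := by
  ext a b
  simp only [offDiagPart_apply, single_apply, Matrix.zero_apply]
  split_ifs <;> grind

theorem offDiagPart_single_of_ne {i j : Fin p} (hij : i ≠ j) (c : ℝ) :
    offDiagPart (single i j c) = single i j c := by
  ext a b
  simp only [offDiagPart_apply, single_apply]
  grind

theorem l1Norm_add_single (M : Matrix (Fin p) (Fin p) ℝ) (i j : Fin p) (c : ℝ) :
    l1Norm (M + single i j c) = l1Norm M + (|M i j + c| - |M i j|) := by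
  have h : ∀ a b, |(M + single i j c) a b| - |M a b| =
      if i = a ∧ j = b then |M i j + c| - |M i j| else 0 := by
    intro a b
    split_ifs with hab
    · obtain ⟨rfl, rfl⟩ := hab
      simp
    · simp [hab]
  rw [← sub_eq_iff_eq_add', l1Norm, l1Norm, ← Finset.sum_sub_distrib]
  simp_rw [← Finset.sum_sub_distrib, h]
  rw [Finset.sum_eq_single i (fun a _ ha => by simp [Ne.symm ha]) (by simp)]
  simp

theorem l1Norm_add_single_add_single (M : Matrix (Fin p) (Fin p) ℝ) {i j : Fin p} (hij : i ≠ j)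
    (hM : M j i = M i j) (c : ℝ) :
    l1Norm (M + (single i j c + single j i c)) = l1Norm M + 2 * (|M i j + c| - |M i j|) := by
  rw [← add_assoc, l1Norm_add_single, l1Norm_add_single]
  simp only [Matrix.add_apply, single_apply_of_ne, hij, hM, false_and, not_false_eq_true,
    add_zero]
  ring

def fglPenalty (lam rho : ℝ) (A B : Matrix (Fin p) (Fin p) ℝ) : ℝ :=
  lam * (l1Norm (offDiagPart A) + l1Norm (offDiagPart B))
    + rho * l1Norm (offDiagPart A - offDiagPart B)

theorem fglPenalty_add_single_self (lam rho : ℝ) (A B : Matrix (Fin p) (Fin p) ℝ) (i : Fin p)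
    (x y : ℝ) :
    fglPenalty lam rho (A + single i i x) (B + single i i y) = fglPenalty lam rho A B := by
  simp [fglPenalty, offDiagPart_add, offDiagPart_single_self]

theorem fglPenalty_add_single_add_single (lam rho : ℝ) {A B : Matrix (Fin p) (Fin p) ℝ}
    (hA : A.IsSymm) (hB : B.IsSymm) {i j : Fin p} (hij : i ≠ j) (x y : ℝ) :
    fglPenalty lam rho (A + (single i j x + single j i x)) (B + (single i j y + single j i y)) =
      fglPenalty lam rho A B + 2 * (lam * (|A i j + x| - |A i j|) + lam * (|B i j + y| - |B i j|)
        + rho * (|A i j - B i j + (x - y)| - |A i j - B i j|)) := by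
  have hsymm : ∀ M : Matrix (Fin p) (Fin p) ℝ, M.IsSymm → offDiagPart M j i = offDiagPart M i j :=
    fun M hM => by simp [offDiagPart_apply, hij, Ne.symm hij, hM.apply i j]
  have hodd : ∀ (M : Matrix (Fin p) (Fin p) ℝ) (c : ℝ),
      offDiagPart (M + (single i j c + single j i c))
        = offDiagPart M + (single i j c + single j i c) := fun M c => by
    rw [offDiagPart_add, offDiagPart_add, offDiagPart_single_of_ne hij,
      offDiagPart_single_of_ne (Ne.symm hij)]
  have hdiff : offDiagPart (A + (single i j x + single j i x))
      - offDiagPart (B + (single i j y + single j i y))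
      = offDiagPart A - offDiagPart B + (single i j (x - y) + single j i (x - y)) := by
    rw [hodd, hodd]
    ext a b
    simp only [Matrix.add_apply, Matrix.sub_apply, single_apply]
    split_ifs <;> ring
  rw [fglPenalty, fglPenalty, hdiff, hodd, hodd, l1Norm_add_single_add_single _ hij (hsymm A hA),
    l1Norm_add_single_add_single _ hij (hsymm B hB),
    l1Norm_add_single_add_single _ hij (by simp [hsymm A hA, hsymm B hB])]
  simp only [Matrix.sub_apply, offDiagPart_apply, if_neg hij]
  ring

theorem objFGL_two (S : Fin 2 → Matrix (Fin p) (Fin p) ℝ) (lam rho : ℝ)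
    (Θ : Fin 2 → Matrix (Fin p) (Fin p) ℝ) :
    objFGL S lam rho Θ = logDetLoss (S 0) (Θ 0) + logDetLoss (S 1) (Θ 1)
      + fglPenalty lam rho (Θ 0) (Θ 1) := by
  simp only [objFGL, fglPenalty, logDetLoss, Finset.sum_sub_distrib, Fin.sum_univ_two,
    Fin.isValue, not_lt_zero, Fin.lt_one_iff, one_ne_zero, ↓reduceIte]
  ring

end Entrywise

theorem neg_le_of_hasDerivAt_of_eventually_le {g : ℝ → ℝ} {d L : ℝ} (hg : HasDerivAt g d 0)
    (h : ∀ᶠ u in 𝓝[>] (0 : ℝ), g 0 ≤ g u + u * L) : -L ≤ d := by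
  have hslope : Tendsto (slope g 0) (𝓝[>] 0) (𝓝 d) :=
    (hasDerivAt_iff_tendsto_slope.1 hg).mono_left (nhdsWithin_mono 0 fun _ hu => ne_of_gt hu)
  refine ge_of_tendsto hslope ?_
  filter_upwards [h, self_mem_nhdsWithin] with u hu (hu0 : 0 < u)
  rw [slope_def_field, sub_zero, le_div_iff₀ hu0]
  linarith

theorem hasDerivAt_logDetLoss_add_smul {n : Type*} [Fintype n] [DecidableEq n]
    (S : Matrix n n ℝ) {Θ : Matrix n n ℝ} (hΘ : Θ.det ≠ 0) (D : Matrix n n ℝ) :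
    HasDerivAt (fun u : ℝ => logDetLoss S (Θ + u • D)) ((S - Θ⁻¹) * D).trace 0 := by
  have htr : HasDerivAt (fun u : ℝ => (S * (Θ + u • D)).trace) (S * D).trace 0 := by
    simp only [mul_add, trace_add, Matrix.mul_smul, trace_smul, smul_eq_mul]
    simpa using ((hasDerivAt_id (0 : ℝ)).mul_const (S * D).trace).const_add (S * Θ).trace
  rw [sub_mul, trace_sub]
  exact htr.sub (hasDerivAt_log_det_add_smul hΘ D)

section Minimizer

variable {p : ℕ} {S Θ : Fin 2 → Matrix (Fin p) (Fin p) ℝ} {lam rho : ℝ}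

def IsFGLMinimizer (S : Fin 2 → Matrix (Fin p) (Fin p) ℝ) (lam rho : ℝ)
    (Θ : Fin 2 → Matrix (Fin p) (Fin p) ℝ) : Prop :=
  ∀ Θ' : Fin 2 → Matrix (Fin p) (Fin p) ℝ, (∀ k, (Θ' k).PosDef) →
    objFGL S lam rho Θ ≤ objFGL S lam rho Θ'

theorem fgl_first_order_condition (hΘ : ∀ k, (Θ k).PosDef)
    (hmin : IsFGLMinimizer S lam rho Θ)
    {D₀ D₁ : Matrix (Fin p) (Fin p) ℝ} (hD₀ : D₀.IsHermitian) (hD₁ : D₁.IsHermitian) {L : ℝ}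
    (hpen : ∀ᶠ u in 𝓝[>] (0 : ℝ), fglPenalty lam rho (Θ 0 + u • D₀) (Θ 1 + u • D₁)
      ≤ fglPenalty lam rho (Θ 0) (Θ 1) + u * L) :
    -L ≤ ((S 0 - (Θ 0)⁻¹) * D₀).trace + ((S 1 - (Θ 1)⁻¹) * D₁).trace := by
  refine neg_le_of_hasDerivAt_of_eventually_le
    (((hasDerivAt_logDetLoss_add_smul (S 0) (hΘ 0).det_pos.ne' D₀)).add
      (hasDerivAt_logDetLoss_add_smul (S 1) (hΘ 1).det_pos.ne' D₁)) ?_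
  have hpd := ((hΘ 0).eventually_posDef_add_smul hD₀).and ((hΘ 1).eventually_posDef_add_smul hD₁)
  filter_upwards [hpen, nhdsWithin_le_nhds hpd] with u hu ⟨h₀, h₁⟩
  have := hmin ![Θ 0 + u • D₀, Θ 1 + u • D₁] (Fin.forall_fin_two.2 ⟨h₀, h₁⟩)
  simp only [objFGL_two, Matrix.cons_val_zero, Matrix.cons_val_one] at this
  simp only [Pi.add_apply, zero_smul, add_zero]
  linarith

theorem fgl_gradient_diag_eq_zero (hΘ : ∀ k, (Θ k).PosDef)
    (hmin : IsFGLMinimizer S lam rho Θ)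
    (k : Fin 2) (i : Fin p) : (S k - (Θ k)⁻¹) i i = 0 := by
  have hsingle : ∀ s : ℝ, (single i i s).IsHermitian := fun s => by
    simp [IsHermitian]
  have key : ∀ s t : ℝ, 0 ≤ (S 0 - (Θ 0)⁻¹) i i * s + (S 1 - (Θ 1)⁻¹) i i * t := by
    intro s t
    have := fgl_first_order_condition hΘ hmin (hsingle s) (hsingle t) (L := 0)
      (Eventually.of_forall fun u => by
        simp [smul_single, fglPenalty_add_single_self])
    simpa [trace_mul_single] using this
  have h₀ : (S 0 - (Θ 0)⁻¹) i i = 0 := by linarith [key 1 0, key (-1) 0]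
  have h₁ : (S 1 - (Θ 1)⁻¹) i i = 0 := by linarith [key 0 1, key 0 (-1)]
  fin_cases k
  exacts [h₀, h₁]

theorem fgl_gradient_offDiag_le (hS : ∀ k, (S k).IsSymm) (hΘ : ∀ k, (Θ k).PosDef)
    (hmin : IsFGLMinimizer S lam rho Θ)
    {i j : Fin p} (hij : i ≠ j) (s t : ℝ) :
    ((Θ 0)⁻¹ - S 0) i j * s + ((Θ 1)⁻¹ - S 1) i j * t ≤
      lam * absDirDeriv (Θ 0 i j) s + lam * absDirDeriv (Θ 1 i j) t
        + rho * absDirDeriv (Θ 0 i j - Θ 1 i j) (s - t) := by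
  have hΘsymm : ∀ k, (Θ k).IsSymm := fun k => isHermitian_iff_isSymm.1 (hΘ k).1
  have hGsymm : ∀ k, (S k - (Θ k)⁻¹).IsSymm := fun k => (hS k).sub (hΘsymm k).inv
  have hE : ∀ x : ℝ, (single i j x + single j i x).IsHermitian := fun x => by
    simp [IsHermitian, add_comm]
  have := fgl_first_order_condition hΘ hmin (hE s) (hE t) (L := 2 * (lam *
    absDirDeriv (Θ 0 i j) s + lam * absDirDeriv (Θ 1 i j) t
      + rho * absDirDeriv (Θ 0 i j - Θ 1 i j) (s - t))) ?_
  · simp only [Matrix.mul_add, trace_add, trace_mul_single, (hGsymm _).apply i j] at this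
    simp only [MulOpposite.smul_eq_mul_unop, MulOpposite.unop_op, Matrix.sub_apply] at *
    linarith
  · filter_upwards [eventually_abs_add_mul (Θ 0 i j) s, eventually_abs_add_mul (Θ 1 i j) t,
      eventually_abs_add_mul (Θ 0 i j - Θ 1 i j) (s - t)] with u h₀ h₁ h₂
    simp only [smul_add, smul_single, smul_eq_mul]
    rw [fglPenalty_add_single_add_single lam rho (hΘsymm 0) (hΘsymm 1) hij, ← mul_sub, h₀, h₁, h₂]
    linarith

theorem exists_fgl_subgradients_apply (hS : ∀ k, (S k).IsSymm) (hlam : 0 ≤ lam) (hrho : 0 ≤ rho)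
    (hΘ : ∀ k, (Θ k).PosDef)
    (hmin : IsFGLMinimizer S lam rho Θ)
    (i j : Fin p) :
    ∃ z₁ z₂ z₁₂ : ℝ, (i = j → z₁ = 0 ∧ z₂ = 0 ∧ z₁₂ = 0) ∧
      (i ≠ j → IsAbsSubgradient (Θ 0 i j) z₁ ∧ IsAbsSubgradient (Θ 1 i j) z₂ ∧
        IsAbsSubgradient (Θ 0 i j - Θ 1 i j) z₁₂) ∧
      (S 0 - (Θ 0)⁻¹) i j + lam * z₁ + rho * z₁₂ = 0 ∧
      (S 1 - (Θ 1)⁻¹) i j + lam * z₂ - rho * z₁₂ = 0 := by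
  by_cases hij : i = j
  · subst hij
    refine ⟨0, 0, 0, fun _ => ⟨rfl, rfl, rfl⟩, fun h => (h rfl).elim, ?_, ?_⟩ <;>
      simp [fgl_gradient_diag_eq_zero hΘ hmin]
  · obtain ⟨z₁, z₂, z₁₂, h₁, h₂, h₁₂, e₁, e₂⟩ :=
      exists_fused_subgradients hlam hrho (fgl_gradient_offDiag_le hS hΘ hmin hij)
    refine ⟨z₁, z₂, z₁₂, fun h => (hij h).elim, fun _ => ⟨h₁, h₂, h₁₂⟩, ?_, ?_⟩ <;>
      simp only [Matrix.sub_apply] at * <;> linarith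

end Minimizer

/-- KKT conditions for the two-group fused graphical lasso minimizer:
there exist subgradient matrices `Z₁, Z₂, Z₁₂` with zero diagonals, sup norm at most 1,
satisfying the stationarity equations and the sign conditions on the off-diagonal
nonzero entries. -/
theorem KKT_conditions_FGL
    (p : ℕ) (Shat : Fin 2 → Matrix (Fin p) (Fin p) ℝ) (hS : ∀ k, (Shat k).IsSymm)
    (lam rho : ℝ) (hlam : 0 ≤ lam) (hrho : 0 ≤ rho)
    (Θhat : Fin 2 → Matrix (Fin p) (Fin p) ℝ) (hΘhat : ∀ k, (Θhat k).PosDef)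
    (hmin : ∀ Θ : Fin 2 → Matrix (Fin p) (Fin p) ℝ, (∀ k, (Θ k).PosDef) →
        objFGL Shat lam rho Θhat ≤ objFGL Shat lam rho Θ) :
    ∃ Z₁ Z₂ Z₁₂ : Matrix (Fin p) (Fin p) ℝ,
      (∀ i, Z₁ i i = 0) ∧ (∀ i, Z₂ i i = 0) ∧ (∀ i, Z₁₂ i i = 0) ∧
      supNorm Z₁ ≤ 1 ∧ supNorm Z₂ ≤ 1 ∧ supNorm Z₁₂ ≤ 1 ∧
      Shat 0 - (Θhat 0)⁻¹ + lam • Z₁ + rho • Z₁₂ = 0 ∧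
      Shat 1 - (Θhat 1)⁻¹ + lam • Z₂ - rho • Z₁₂ = 0 ∧
      (∀ i j, i ≠ j → Θhat 0 i j ≠ 0 → Z₁ i j = Real.sign (Θhat 0 i j)) ∧
      (∀ i j, i ≠ j → Θhat 1 i j ≠ 0 → Z₂ i j = Real.sign (Θhat 1 i j)) ∧
      (∀ i j, i ≠ j → (Θhat 0 - Θhat 1) i j ≠ 0 →
        Z₁₂ i j = Real.sign ((Θhat 0 - Θhat 1) i j)) := by
  choose Z₁ Z₂ Z₁₂ hdiag hoff heq₁ heq₂ using
    exists_fgl_subgradients_apply hS hlam hrho hΘhat hmin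
  have hbound : ∀ i j, |Z₁ i j| ≤ 1 ∧ |Z₂ i j| ≤ 1 ∧ |Z₁₂ i j| ≤ 1 := fun i j => by
    by_cases hij : i = j
    · simp [hdiag i j hij]
    · obtain ⟨h₁, h₂, h₁₂⟩ := hoff i j hij
      exact ⟨h₁.1, h₂.1, h₁₂.1⟩
  refine ⟨Z₁, Z₂, Z₁₂, fun i => (hdiag i i rfl).1, fun i => (hdiag i i rfl).2.1,
    fun i => (hdiag i i rfl).2.2, supNorm_le zero_le_one fun i j => (hbound i j).1,
    supNorm_le zero_le_one fun i j => (hbound i j).2.1,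
    supNorm_le zero_le_one fun i j => (hbound i j).2.2, ?_, ?_,
    fun i j hij => (hoff i j hij).1.2, fun i j hij => (hoff i j hij).2.1.2,
    fun i j hij => (hoff i j hij).2.2.2⟩
  exacts [Matrix.ext heq₁, Matrix.ext heq₂]
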